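/- arXiv:2208.03406 — 2 statements merged into one kernel-verified Lean document; each statement's English description precedes it below -/
import Mathlib

section
/- If the mixed strategy profile x = (x^1,…,x^n) is a Nash equilibrium, then there exist, for each player i, real numbers ū^i and, for each s ∈ S_i, reals u^i_s, r^i_s and b^i_s ∈ {0,1}, such that all MIMLP1 constraints hold: u^i_s = u_i(s, x); ū^i ≥ u^i_s; r^i_s = ū^i − u^i_s; r^i_s ≥ 0; x^i(s) ≤ 1 − b^i_s; and r^i_s ≤ U^i b^i_s, for all i and s ∈ S_i. -/
open Finset

/-- Expected payoff `U_i(x)` of player `i` under the mixed strategy profile `x`. -/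
def expPayoff {n : ℕ} {S : Fin n → Type} [∀ i, Fintype (S i)]
    (A : Fin n → (∀ j, S j) → ℝ) (x : ∀ i, S i → ℝ) (i : Fin n) : ℝ :=
  ∑ t : ∀ j, S j, A i t * ∏ j, x j (t j)

/-- Expected payoff `u_i(s, x)` of player `i` playing the pure strategy `s` while the
other players play their mixed strategies from `x`: summing over full pure profiles `t`
with `t i = s` is the same as summing over tuples `ŝ` of pure strategies of the others. -/
def purePayoff {n : ℕ} {S : Fin n → Type} [∀ i, Fintype (S i)] [∀ i, DecidableEq (S i)]
    (A : Fin n → (∀ j, S j) → ℝ) (x : ∀ i, S i → ℝ) (i : Fin n) (s : S i) : ℝ :=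
  ∑ t : ∀ j, S j, if t i = s then A i t * ∏ j ∈ Finset.univ.erase i, x j (t j) else 0

/-- `U^i`: the maximum difference of any two payoffs of player `i`. -/
noncomputable def payoffRange {n : ℕ} {S : Fin n → Type} [∀ i, Fintype (S i)]
    [∀ i, Nonempty (S i)] (A : Fin n → (∀ j, S j) → ℝ) (i : Fin n) : ℝ :=
  Finset.univ.sup' Finset.univ_nonempty (A i) - Finset.univ.inf' Finset.univ_nonempty (A i)

/-! Take `ū^i = U_i(x)`, `u^i_s = u_i(s, x)`, `r^i_s = ū^i - u^i_s`, and `b^i_s = 1` exactly when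
`x^i(s) = 0`. Deviating to the pure strategy `s` gives `u^i_s ≤ ū^i`. Since `ū^i` is the
`x^i`-average of the `u^i_s`, equality holds on the support of `x^i`, so `r^i_s = 0` there.
Off the support, `r^i_s` is the difference of two averages of payoffs of player `i`, hence at
most `U^i`. -/

section WeightedAverage

variable {ι : Type*} [Fintype ι] {w f : ι → ℝ}

lemma sum_mul_le_of_mem_stdSimplex {M : ℝ} (hw : w ∈ stdSimplex ℝ ι) (hf : ∀ a, f a ≤ M) :
    ∑ a, w a * f a ≤ M :=
  calc ∑ a, w a * f a ≤ ∑ a, w a * M :=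
        sum_le_sum fun a _ => mul_le_mul_of_nonneg_left (hf a) (hw.1 a)
    _ = M := by rw [← sum_mul, hw.2, one_mul]

lemma le_sum_mul_of_mem_stdSimplex {m : ℝ} (hw : w ∈ stdSimplex ℝ ι) (hf : ∀ a, m ≤ f a) :
    m ≤ ∑ a, w a * f a :=
  calc m = ∑ a, w a * m := by rw [← sum_mul, hw.2, one_mul]
    _ ≤ ∑ a, w a * f a := sum_le_sum fun a _ => mul_le_mul_of_nonneg_left (hf a) (hw.1 a)

lemma eq_of_sum_mul_eq_of_mem_stdSimplex {M : ℝ} (hw : w ∈ stdSimplex ℝ ι)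
    (hf : ∀ a, f a ≤ M) (hsum : ∑ a, w a * f a = M) {a : ι} (ha : w a ≠ 0) : f a = M := by
  have hgap : ∑ b, w b * (M - f b) = 0 := by
    simp only [mul_sub, sum_sub_distrib, ← sum_mul, hw.2, one_mul, hsum, sub_self]
  have hterm := (sum_eq_zero_iff_of_nonneg fun b _ =>
    mul_nonneg (hw.1 b) (sub_nonneg.2 (hf b))).1 hgap a (mem_univ a)
  linarith [(mul_eq_zero.1 hterm).resolve_left ha]

end WeightedAverage

section Payoffs

variable {n : ℕ} {S : Fin n → Type} [∀ i, Fintype (S i)]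
  (A : Fin n → (∀ j, S j) → ℝ) (i : Fin n)

lemma prod_mem_stdSimplex {y : ∀ i, S i → ℝ} (hy : ∀ j, y j ∈ stdSimplex ℝ (S j)) :
    (fun t : ∀ j, S j => ∏ j, y j (t j)) ∈ stdSimplex ℝ (∀ j, S j) :=
  ⟨fun t => prod_nonneg fun j _ => (hy j).1 (t j),
    by rw [← Fintype.prod_sum]; simp [fun j => (hy j).2]⟩

lemma update_mem_stdSimplex [DecidableEq (Fin n)] {y : ∀ i, S i → ℝ}
    (hy : ∀ j, y j ∈ stdSimplex ℝ (S j)) {z : S i → ℝ} (hz : z ∈ stdSimplex ℝ (S i)) :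
    ∀ j, Function.update y i z j ∈ stdSimplex ℝ (S j) :=
  Function.forall_update_iff y (p := fun j v => v ∈ stdSimplex ℝ (S j)) |>.2
    ⟨hz, fun j _ => hy j⟩

variable [∀ i, Nonempty (S i)]

lemma inf'_le_expPayoff {y : ∀ i, S i → ℝ} (hy : ∀ j, y j ∈ stdSimplex ℝ (S j)) :
    univ.inf' univ_nonempty (A i) ≤ expPayoff A y i := by
  simp_rw [expPayoff, mul_comm (A i _)]
  exact le_sum_mul_of_mem_stdSimplex (prod_mem_stdSimplex hy) fun t => inf'_le _ (mem_univ t)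

lemma expPayoff_le_sup' {y : ∀ i, S i → ℝ} (hy : ∀ j, y j ∈ stdSimplex ℝ (S j)) :
    expPayoff A y i ≤ univ.sup' univ_nonempty (A i) := by
  simp_rw [expPayoff, mul_comm (A i _)]
  exact sum_mul_le_of_mem_stdSimplex (prod_mem_stdSimplex hy) fun t => le_sup' _ (mem_univ t)

lemma expPayoff_sub_expPayoff_le_payoffRange {y z : ∀ i, S i → ℝ}
    (hy : ∀ j, y j ∈ stdSimplex ℝ (S j)) (hz : ∀ j, z j ∈ stdSimplex ℝ (S j)) :
    expPayoff A y i - expPayoff A z i ≤ payoffRange A i :=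
  sub_le_sub (expPayoff_le_sup' A i hy) (inf'_le_expPayoff A i hz)

end Payoffs

section PurePayoff

variable {n : ℕ} {S : Fin n → Type} [∀ i, Fintype (S i)] [∀ i, DecidableEq (S i)]
  (A : Fin n → (∀ j, S j) → ℝ) (x : ∀ i, S i → ℝ) (i : Fin n)

lemma purePayoff_eq_expPayoff_update (s : S i) :
    purePayoff A x i s = expPayoff A (Function.update x i (Pi.single s 1)) i := by
  refine sum_congr rfl fun t _ => ?_
  have hothers : ∏ j ∈ univ.erase i, Function.update x i (Pi.single s 1) j (t j) =
      ∏ j ∈ univ.erase i, x j (t j) :=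
    prod_congr rfl fun j hj => by rw [Function.update_of_ne (ne_of_mem_erase hj)]
  rw [← mul_prod_erase univ _ (mem_univ i), Function.update_self, hothers]
  by_cases h : t i = s <;> simp [h]

lemma expPayoff_eq_sum_mul_purePayoff :
    expPayoff A x i = ∑ s, x i s * purePayoff A x i s := by
  simp_rw [purePayoff, mul_sum, mul_ite, mul_zero]
  rw [sum_comm]
  refine sum_congr rfl fun t _ => ?_
  rw [sum_ite_eq univ (t i), if_pos (mem_univ _), ← mul_prod_erase univ _ (mem_univ i)]
  ring

variable (hNash : ∀ y ∈ stdSimplex ℝ (S i),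
  expPayoff A (Function.update x i y) i ≤ expPayoff A x i)
include hNash

lemma purePayoff_le_expPayoff_of_nash (s : S i) : purePayoff A x i s ≤ expPayoff A x i := by
  rw [purePayoff_eq_expPayoff_update]
  exact hNash _ (single_mem_stdSimplex ℝ s)

lemma purePayoff_eq_expPayoff_of_nash (hx : x i ∈ stdSimplex ℝ (S i)) {s : S i}
    (hs : x i s ≠ 0) : purePayoff A x i s = expPayoff A x i :=
  eq_of_sum_mul_eq_of_mem_stdSimplex hx (purePayoff_le_expPayoff_of_nash A x i hNash)
    (expPayoff_eq_sum_mul_purePayoff A x i).symm hs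

end PurePayoff

theorem nash_gives_mimlp1_feasible_general
    (n : ℕ) (S : Fin n → Type)
    [∀ i, Fintype (S i)] [∀ i, Nonempty (S i)] [∀ i, DecidableEq (S i)]
    (A : Fin n → (∀ j, S j) → ℝ)
    (x : ∀ i, S i → ℝ)
    (hx0 : ∀ i s, 0 ≤ x i s) (hx1 : ∀ i, ∑ s, x i s = 1)
    (hNash : ∀ (i : Fin n) (y : S i → ℝ), (∀ s, 0 ≤ y s) → ∑ s, y s = 1 →
      expPayoff A (Function.update x i y) i ≤ expPayoff A x i)
    :
    ∃ (ubar : Fin n → ℝ) (u r b : ∀ i, S i → ℝ),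
      ∀ (i : Fin n) (s : S i),
        (b i s = 0 ∨ b i s = 1) ∧
        u i s = purePayoff A x i s ∧
        u i s ≤ ubar i ∧
        r i s = ubar i - u i s ∧
        0 ≤ r i s ∧
        x i s ≤ 1 - b i s ∧
        r i s ≤ payoffRange A i * b i s := by
  have hmixed : ∀ j, x j ∈ stdSimplex ℝ (S j) := fun j => ⟨hx0 j, hx1 j⟩
  refine ⟨fun i => expPayoff A x i, fun i s => purePayoff A x i s,
    fun i s => expPayoff A x i - purePayoff A x i s,
    fun i s => if x i s = 0 then 1 else 0, fun i s => ?_⟩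
  have hNash_i : ∀ y ∈ stdSimplex ℝ (S i), expPayoff A (Function.update x i y) i ≤
      expPayoff A x i := fun y hy => hNash i y hy.1 hy.2
  have hbest := purePayoff_le_expPayoff_of_nash A x i hNash_i s
  refine ⟨by dsimp only; split_ifs <;> simp, rfl, hbest, rfl, sub_nonneg.2 hbest, ?_, ?_⟩ <;>
    dsimp only <;> split_ifs with hs
  · simp [hs]
  · simpa using (mem_Icc_of_mem_stdSimplex (hmixed i) s).2
  · rw [mul_one, purePayoff_eq_expPayoff_update]
    exact expPayoff_sub_expPayoff_le_payoffRange A i hmixed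
      (update_mem_stdSimplex i hmixed (single_mem_stdSimplex ℝ s))
  · rw [mul_zero, purePayoff_eq_expPayoff_of_nash A x i hNash_i (hmixed i) hs, sub_self]

/-- If the mixed strategy profile `x` is a Nash equilibrium, then there
exist `ū^i`, `u^i_s`, `r^i_s` and binary `b^i_s` satisfying all MIMLP1 constraints. -/
theorem nash_gives_mimlp1_feasible
    (n : ℕ) (hn : 2 ≤ n) (S : Fin n → Type)
    [∀ i, Fintype (S i)] [∀ i, Nonempty (S i)] [∀ i, DecidableEq (S i)]
    (A : Fin n → (∀ j, S j) → ℝ)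
    (x : ∀ i, S i → ℝ)
    (hx0 : ∀ i s, 0 ≤ x i s) (hx1 : ∀ i, ∑ s, x i s = 1)
    (hNash : ∀ (i : Fin n) (y : S i → ℝ), (∀ s, 0 ≤ y s) → ∑ s, y s = 1 →
      expPayoff A (Function.update x i y) i ≤ expPayoff A x i)
    :
    ∃ (ubar : Fin n → ℝ) (u r b : ∀ i, S i → ℝ),
      ∀ (i : Fin n) (s : S i),
        (b i s = 0 ∨ b i s = 1) ∧
        u i s = purePayoff A x i s ∧
        u i s ≤ ubar i ∧
        r i s = ubar i - u i s ∧
        0 ≤ r i s ∧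
        x i s ≤ 1 - b i s ∧
        r i s ≤ payoffRange A i * b i s :=
  nash_gives_mimlp1_feasible_general n S A x hx0 hx1 hNash
end

section
/- Suppose the mixed strategy profile x = (x^1,…,x^n), reals ū^i, and for each player i and s ∈ S_i reals u^i_s, r^i_s and b^i_s ∈ {0,1} satisfy all MIMLP1 constraints: u^i_s = u_i(s, x); ū^i ≥ u^i_s; r^i_s = ū^i − u^i_s; r^i_s ≥ 0; x^i(s) ≤ 1 − b^i_s; and r^i_s ≤ U^i b^i_s, for all i and s ∈ S_i. Then x is a Nash equilibrium. -/
open Finset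

lemma sum_mul_le_of_le {ι : Type*} [Fintype ι] {w f : ι → ℝ} {c : ℝ}
    (hw0 : ∀ s, 0 ≤ w s) (hw1 : ∑ s, w s = 1) (hf : ∀ s, f s ≤ c) :
    ∑ s, w s * f s ≤ c :=
  calc ∑ s, w s * f s ≤ ∑ s, w s * c :=
        sum_le_sum fun s _ => mul_le_mul_of_nonneg_left (hf s) (hw0 s)
    _ = c := by rw [← sum_mul, hw1, one_mul]

lemma sum_mul_eq_of_eq_on_support {ι : Type*} [Fintype ι] {w f : ι → ℝ} {c : ℝ}
    (hw1 : ∑ s, w s = 1) (hf : ∀ s, w s ≠ 0 → f s = c) :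
    ∑ s, w s * f s = c :=
  calc ∑ s, w s * f s = ∑ s, w s * c := by
        refine sum_congr rfl fun s _ => ?_
        by_cases hs : w s = 0
        · simp [hs]
        · rw [hf s hs]
    _ = c := by rw [← sum_mul, hw1, one_mul]

section Payoff

variable {n : ℕ} {S : Fin n → Type} [∀ i, Fintype (S i)] [∀ i, DecidableEq (S i)]

lemma expPayoff_update (A : Fin n → (∀ j, S j) → ℝ) (x : ∀ i, S i → ℝ) (i : Fin n)
    (y : S i → ℝ) :
    expPayoff A (Function.update x i y) i = ∑ s, y s * purePayoff A x i s := by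
  unfold expPayoff purePayoff
  simp_rw [mul_sum, mul_ite, mul_zero]
  rw [sum_comm]
  refine sum_congr rfl fun t _ => ?_
  rw [sum_ite_eq univ (t i) fun s => y s * (A i t * ∏ j ∈ univ.erase i, x j (t j)),
    if_pos (mem_univ _), ← mul_prod_erase univ _ (mem_univ i), Function.update_self,
    prod_congr rfl fun j hj => by rw [Function.update_of_ne (ne_of_mem_erase hj)]]
  ring

lemma expPayoff_eq_sum_purePayoff (A : Fin n → (∀ j, S j) → ℝ) (x : ∀ i, S i → ℝ)
    (i : Fin n) :
    expPayoff A x i = ∑ s, x i s * purePayoff A x i s := by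
  rw [← expPayoff_update A x i (x i), Function.update_eq_self]

end Payoff

lemma eq_of_mimlp1_constraints {p u ubar r b U : ℝ} (hp : 0 < p) (hb : b = 0 ∨ b = 1)
    (hr : r = ubar - u) (hr0 : 0 ≤ r) (hpb : p ≤ 1 - b) (hrb : r ≤ U * b) :
    u = ubar := by
  obtain rfl : b = 0 := hb.resolve_right fun h => by linarith
  linarith [mul_zero U]

theorem mimlp1_feasible_gives_nash_general
    (n : ℕ) (S : Fin n → Type)
    [∀ i, Fintype (S i)] [∀ i, Nonempty (S i)] [∀ i, DecidableEq (S i)]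
    (A : Fin n → (∀ j, S j) → ℝ)
    (x : ∀ i, S i → ℝ)
    (hx0 : ∀ i s, 0 ≤ x i s) (hx1 : ∀ i, ∑ s, x i s = 1)
    (ubar : Fin n → ℝ) (u r b : ∀ i, S i → ℝ)
    (hfeas : ∀ (i : Fin n) (s : S i),
        (b i s = 0 ∨ b i s = 1) ∧
        u i s = purePayoff A x i s ∧
        u i s ≤ ubar i ∧
        r i s = ubar i - u i s ∧
        0 ≤ r i s ∧
        x i s ≤ 1 - b i s ∧
        r i s ≤ payoffRange A i * b i s) :
    ∀ (i : Fin n) (y : S i → ℝ), (∀ s, 0 ≤ y s) → ∑ s, y s = 1 →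
      expPayoff A (Function.update x i y) i ≤ expPayoff A x i := by
  intro i y hy0 hy1
  have hbound : ∀ s, purePayoff A x i s ≤ ubar i := fun s => by
    obtain ⟨-, hu, hle, -⟩ := hfeas i s
    rwa [← hu]
  have hsupport : ∀ s, x i s ≠ 0 → purePayoff A x i s = ubar i := fun s hs => by
    obtain ⟨hb, hu, -, hr, hr0, hxb, hrb⟩ := hfeas i s
    rw [← hu]
    exact eq_of_mimlp1_constraints ((hx0 i s).lt_of_ne' hs) hb hr hr0 hxb hrb
  rw [expPayoff_update, expPayoff_eq_sum_purePayoff, sum_mul_eq_of_eq_on_support (hx1 i) hsupport]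
  exact sum_mul_le_of_le hy0 hy1 hbound

/-- If the mixed strategy profile `x` together with `ū^i`, `u^i_s`,
`r^i_s` and binary `b^i_s` satisfies all MIMLP1 constraints, then `x` is a Nash
equilibrium. -/
theorem mimlp1_feasible_gives_nash
    (n : ℕ) (hn : 2 ≤ n) (S : Fin n → Type)
    [∀ i, Fintype (S i)] [∀ i, Nonempty (S i)] [∀ i, DecidableEq (S i)]
    (A : Fin n → (∀ j, S j) → ℝ)
    (x : ∀ i, S i → ℝ)
    (hx0 : ∀ i s, 0 ≤ x i s) (hx1 : ∀ i, ∑ s, x i s = 1)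
    (ubar : Fin n → ℝ) (u r b : ∀ i, S i → ℝ)
    (hfeas : ∀ (i : Fin n) (s : S i),
        (b i s = 0 ∨ b i s = 1) ∧
        u i s = purePayoff A x i s ∧
        u i s ≤ ubar i ∧
        r i s = ubar i - u i s ∧
        0 ≤ r i s ∧
        x i s ≤ 1 - b i s ∧
        r i s ≤ payoffRange A i * b i s) :
    ∀ (i : Fin n) (y : S i → ℝ), (∀ s, 0 ≤ y s) → ∑ s, y s = 1 →
      expPayoff A (Function.update x i y) i ≤ expPayoff A x i :=
  mimlp1_feasible_gives_nash_general n S A x hx0 hx1 ubar u r b hfeas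
end
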